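/- Let m, n, μ be positive integers satisfying 2m + n = (4^μ − 1)/3 and 9m ≤ 4^μ − 5·2^{μ−1} + 1 if μ is odd, respectively 9m ≤ 4^μ − 2^{μ+1} + 1 if μ is even. Then there exists a 1-perfect code in the Doob graph D(m,n). -/

import Mathlib

open SimpleGraph

/-- The box (Cartesian) product of an indexed family of simple graphs. -/
def boxPi {ι : Type*} {V : ι → Type*} (G : ∀ i, SimpleGraph (V i)) :
    SimpleGraph (∀ i, V i) where
  Adj x y := ∃ i, (G i).Adj (x i) (y i) ∧ ∀ j, j ≠ i → x j = y j
  symm := by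
    refine ⟨?_⟩
    rintro x y ⟨i, h, he⟩
    exact ⟨i, (G i).adj_symm h, fun j hj => (he j hj).symm⟩
  loopless := by
    refine ⟨?_⟩
    rintro x ⟨i, h, -⟩
    exact (G i).irrefl h

/-- The Shrikhande graph on `(ZMod 4) × (ZMod 4)`. -/
def Shri : SimpleGraph (ZMod 4 × ZMod 4) where
  Adj a b := a - b ∈
    ({(0, 1), (1, 0), (1, 1), (0, 3), (3, 0), (3, 3)} : Finset (ZMod 4 × ZMod 4))
  symm := by
    have h : ∀ a b : ZMod 4 × ZMod 4,
        a - b ∈ ({(0, 1), (1, 0), (1, 1), (0, 3), (3, 0), (3, 3)} :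
          Finset (ZMod 4 × ZMod 4)) →
        b - a ∈ ({(0, 1), (1, 0), (1, 1), (0, 3), (3, 0), (3, 3)} :
          Finset (ZMod 4 × ZMod 4)) := by decide
    exact ⟨fun a b hab => h a b hab⟩
  loopless := by
    refine ⟨?_⟩
    intro a h
    rw [sub_self] at h
    revert h
    decide

/-- `C` is a 1-perfect code in `G`: every vertex is at graph distance at most 1
(i.e., equal or adjacent) from exactly one element of `C`. -/
def IsPerfectCode {V : Type*} (G : SimpleGraph V) (C : Set V) : Prop :=
  ∀ v : V, ∃! c : V, c ∈ C ∧ (v = c ∨ G.Adj v c)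

/-- The vertex set `ℤ₄^{2m} × ℤ₂^{2n}`. -/
abbrev DoobVtx2 (m n : ℕ) : Type :=
  (Fin m → ZMod 4 × ZMod 4) × (Fin n → ZMod 2 × ZMod 2)

/-- The Doob graph `D(m, n)` on `ℤ₄^{2m} × ℤ₂^{2n}`. -/
def DoobGraphZ2 (m n : ℕ) : SimpleGraph (DoobVtx2 m n) :=
  (boxPi fun _ : Fin m => Shri) □
    (boxPi fun _ : Fin n => (⊤ : SimpleGraph (ZMod 2 × ZMod 2)))

/-!
Let `𝔽₄` be the field with four elements and `W = 𝔽₄^a × 𝔽₄^b` with `a + b = μ`, so that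
`|W| = 4^μ = 1 + 6m + 3n` is the size of a closed neighbourhood in `D(m, n)`. We label the
vertices by a syndrome in `W`, a sum of one contribution per `K₄`-coordinate, such that along the
edges at any vertex the syndrome changes by every nonzero vector of `W`. By counting, these changes
are then distinct, so every fibre of the syndrome is a 1-perfect code.

A `K₄`-coordinate attached to a point `⟨u⟩` of `ℙ(W)` contributes `z • u`, and so realises the
three nonzero multiples of `u`. The Shrikhande coordinates sit at distinct cells `(⟨p⟩, ⟨q⟩)` of
`ℙ(𝔽₄^a) × ℙ(𝔽₄^b)`, which is possible exactly under the bound on `m`, and each is paired with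
one `K₄`-coordinate. The pair `Sh □ K₄` carries a labelling by `𝔽₄²` whose nine neighbour
differences are all `(c, e)` with `c, e ≠ 0`, so it realises the vectors `(c • p, e • q)`, that is,
the three points `⟨(p, k • q)⟩`, `k ≠ 0`, of `ℙ(W)`. The other `n - m` coordinates of type `K₄`
take the remaining points of `ℙ(W)`.
-/

namespace SimpleGraph

section BoxPi

variable {ι : Type*} {V : ι → Type*} (G : ∀ i, SimpleGraph (V i))

theorem boxPi_adj_update [DecidableEq ι] {x : ∀ i, V i} {i : ι} {a : V i}
    (h : (G i).Adj (x i) a) : (boxPi G).Adj x (Function.update x i a) :=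
  ⟨i, by simpa using h, fun _ hj => (Function.update_of_ne hj _ _).symm⟩

theorem neighborSet_boxPi_subset [DecidableEq ι] (x : ∀ i, V i) :
    (boxPi G).neighborSet x ⊆ ⋃ i, Function.update x i '' (G i).neighborSet (x i) := by
  rintro y ⟨i, hi, hne⟩
  refine Set.mem_iUnion.mpr ⟨i, y i, hi, funext fun j => ?_⟩
  rcases eq_or_ne j i with rfl | hj
  · simp
  · simp [Function.update_of_ne hj, hne j hj]

theorem ncard_neighborSet_boxPi_le [Fintype ι] [∀ i, Finite (V i)] (x : ∀ i, V i) :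
    ((boxPi G).neighborSet x).ncard ≤ ∑ i, ((G i).neighborSet (x i)).ncard := by
  classical
  calc ((boxPi G).neighborSet x).ncard
      ≤ (⋃ i, Function.update x i '' (G i).neighborSet (x i)).ncard :=
        Set.ncard_le_ncard (neighborSet_boxPi_subset G x)
    _ ≤ ∑ i, (Function.update x i '' (G i).neighborSet (x i)).ncard :=
        Set.ncard_iUnion_le_of_fintype _
    _ ≤ ∑ i, ((G i).neighborSet (x i)).ncard :=
        Finset.sum_le_sum fun i _ => Set.ncard_image_le

theorem boxProd_boxPi_adj_update {κ : Type*} {W : κ → Type*} [DecidableEq ι] [DecidableEq κ]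
    (H : ∀ j, SimpleGraph (W j)) {x : ∀ i, V i} {y : ∀ j, W j} {i : ι} {j : κ} {a : V i}
    {b : W j} (h : (G i □ H j).Adj (x i, y j) (a, b)) :
    (boxPi G □ boxPi H).Adj (x, y) (Function.update x i a, Function.update y j b) := by
  rcases boxProd_adj.mp h with ⟨ha, hb : y j = b⟩ | ⟨hb, ha : x i = a⟩
  · rw [← hb, Function.update_eq_self]
    exact boxProd_adj_left.mpr (boxPi_adj_update G ha)
  · rw [← ha, Function.update_eq_self]
    exact boxProd_adj_right.mpr (boxPi_adj_update H hb)

end BoxPi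

theorem ncard_neighborSet_boxProd_le {α β : Type*} (G : SimpleGraph α) (H : SimpleGraph β)
    (x : α × β) :
    ((G □ H).neighborSet x).ncard ≤ (G.neighborSet x.1).ncard + (H.neighborSet x.2).ncard := by
  rw [neighborSet_boxProd]
  refine (Set.ncard_union_le _ _).trans ?_
  simp [Set.ncard_prod]

end SimpleGraph

theorem Fintype.sum_sub_sum_eq_of_forall_ne {ι M : Type*} [Fintype ι] [AddCommGroup M]
    {f g : ι → M} (j : ι) (h : ∀ i, i ≠ j → f i = g i) :
    ∑ i, f i - ∑ i, g i = f j - g j := by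
  classical
  rw [← Finset.add_sum_erase _ f (Finset.mem_univ j),
    ← Finset.add_sum_erase _ g (Finset.mem_univ j),
    Finset.sum_congr rfl fun i hi => h i (Finset.ne_of_mem_erase hi)]
  abel

open SimpleGraph

theorem isPerfectCode_preimage_of_surjOn {V A : Type*} [Finite V] (G : SimpleGraph V)
    (σ : V → A) (hsurj : ∀ v, Set.SurjOn σ (insert v (G.neighborSet v)) Set.univ)
    (hcard : ∀ v, (insert v (G.neighborSet v)).ncard ≤ Nat.card A) (a : A) :
    IsPerfectCode G (σ ⁻¹' {a}) := by
  intro v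
  have himage : σ '' insert v (G.neighborSet v) = Set.univ :=
    Set.eq_univ_of_univ_subset (hsurj v)
  have hinj : Set.InjOn σ (insert v (G.neighborSet v)) :=
    Set.injOn_of_ncard_image_eq <| le_antisymm Set.ncard_image_le <|
      (hcard v).trans (by rw [himage, Set.ncard_univ])
  obtain ⟨c, hc, rfl⟩ := hsurj v (Set.mem_univ a)
  have hmem : ∀ {w}, (v = w ∨ G.Adj v w) ↔ w ∈ insert v (G.neighborSet v) := by
    simp [eq_comm]
  exact ⟨c, ⟨rfl, hmem.mpr hc⟩, fun w ⟨hw, hvw⟩ => hinj (hmem.mp hvw) hc hw⟩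

instance : DecidableRel Shri.Adj := fun a b => inferInstanceAs (Decidable (a - b ∈ _))

theorem ncard_neighborSet_shri (x : ZMod 4 × ZMod 4) : (Shri.neighborSet x).ncard = 6 := by
  rw [← coe_neighborFinset, Set.ncard_coe_finset]
  revert x
  decide

theorem ncard_neighborSet_top_zmod_two_sq (z : ZMod 2 × ZMod 2) :
    ((⊤ : SimpleGraph (ZMod 2 × ZMod 2)).neighborSet z).ncard = 3 := by
  rw [neighborSet_top, Set.ncard_compl, Set.ncard_singleton]
  simp

theorem ncard_insert_neighborSet_doobGraphZ2_le {m n : ℕ} (v : DoobVtx2 m n) :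
    (insert v ((DoobGraphZ2 m n).neighborSet v)).ncard ≤ 6 * m + 3 * n + 1 := by
  refine (Set.ncard_insert_le _ _).trans (Nat.add_le_add_right ?_ 1)
  refine (ncard_neighborSet_boxProd_le _ _ v).trans (add_le_add ?_ ?_)
  · refine (ncard_neighborSet_boxPi_le _ v.1).trans ?_
    simp [ncard_neighborSet_shri, mul_comm]
  · refine (ncard_neighborSet_boxPi_le _ v.2).trans ?_
    simp only [ncard_neighborSet_top_zmod_two_sq, Finset.sum_const, Finset.card_univ,
      Fintype.card_fin, smul_eq_mul, mul_comm, le_refl]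

section Gadget

instance : DecidableRel (Shri □ (⊤ : SimpleGraph (ZMod 2 × ZMod 2))).Adj :=
  fun _ _ => decidable_of_iff' _ boxProd_adj

def frob (k : ZMod 2 × ZMod 2) : ZMod 2 × ZMod 2 := (k.1 + k.2, k.2)

def halfLabel (x y : ZMod 4) (k : ZMod 2 × ZMod 2) : ZMod 2 × ZMod 2 :=
  (((x.val / 2 + y.val : ℕ) : ZMod 2), ((x.val : ℕ) : ZMod 2)) + frob^[x.val] k

/-- A labelling of `Sh □ K₄` by `𝔽₄²`, written additively as `(ZMod 2 × ZMod 2)²`, in which the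
nine neighbours of every vertex receive the nine differences with both coordinates nonzero. It was
found by computer search; `frob` is the Frobenius of `𝔽₄` in the basis `(1, ω)`. -/
def shK4Label (u : (ZMod 4 × ZMod 4) × (ZMod 2 × ZMod 2)) :
    (ZMod 2 × ZMod 2) × (ZMod 2 × ZMod 2) :=
  (halfLabel u.1.1 u.1.2 u.2, halfLabel u.1.2 u.1.1 (frob u.2))

def shK4Moves : Finset ((ZMod 4 × ZMod 4) × (ZMod 2 × ZMod 2)) :=
  {((0, 1), 0), ((1, 0), 0), ((1, 1), 0), ((0, 3), 0), ((3, 0), 0), ((3, 3), 0),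
   (0, (1, 0)), (0, (0, 1)), (0, (1, 1))}

set_option maxRecDepth 10000 in
theorem exists_shK4Moves_shK4Label_sub_eq : ∀ u d, d.1 ≠ 0 → d.2 ≠ 0 →
    ∃ δ ∈ shK4Moves, (Shri □ (⊤ : SimpleGraph (ZMod 2 × ZMod 2))).Adj u (u + δ) ∧
      shK4Label (u + δ) - shK4Label u = d := by
  decide

variable {K : Type*} [Field K] (ψ : ZMod 2 × ZMod 2 ≃+ K)

theorem exists_adj_shK4Label_sub_eq (u : (ZMod 4 × ZMod 4) × (ZMod 2 × ZMod 2)) {c e : K}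
    (hc : c ≠ 0) (he : e ≠ 0) :
    ∃ u', (Shri □ (⊤ : SimpleGraph (ZMod 2 × ZMod 2))).Adj u u' ∧
      ψ (shK4Label u').1 - ψ (shK4Label u).1 = c ∧
      ψ (shK4Label u').2 - ψ (shK4Label u).2 = e := by
  obtain ⟨δ, -, hadj, hδ⟩ := exists_shK4Moves_shK4Label_sub_eq u (ψ.symm c, ψ.symm e)
    (by simpa using hc) (by simpa using he)
  refine ⟨u + δ, hadj, ?_, ?_⟩
  · rw [← map_sub, ← Prod.fst_sub, hδ, ψ.apply_symm_apply]
  · rw [← map_sub, ← Prod.snd_sub, hδ, ψ.apply_symm_apply]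

end Gadget

open scoped LinearAlgebra.Projectivization

namespace Projectivization

variable {K V : Type*} [Field K] [AddCommGroup V] [Module K V]

variable (K) in
theorem exists_units_smul_rep_eq (s : V) (hs : s ≠ 0) : ∃ c : Kˣ, c • (mk K s hs).rep = s := by
  obtain ⟨a, ha⟩ := exists_smul_eq_mk_rep K s hs
  exact ⟨a⁻¹, by rw [← ha, inv_smul_smul]⟩

theorem eq_and_eq_of_units_smul_rep_eq {p p' : ℙ K V} {a a' : Kˣ}
    (h : a • p.rep = a' • p'.rep) : p = p' ∧ a = a' := by
  have hp : p = p' := by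
    rw [← mk_rep p, ← mk_rep p', mk_eq_mk_iff]
    exact ⟨a⁻¹ * a', by rw [mul_smul, ← h, inv_smul_smul]⟩
  subst hp
  exact ⟨rfl, Units.ext (smul_left_injective K p.rep_nonzero h)⟩

variable {U U' : Type*} [AddCommGroup U] [Module K U] [AddCommGroup U'] [Module K U']

noncomputable def cellPoint (c : ℙ K U × ℙ K U') (k : Kˣ) : ℙ K (U × U') :=
  mk K (c.1.rep, k • c.2.rep) fun h => c.1.rep_nonzero (congrArg Prod.fst h)

theorem cellPoint_injective :
    Function.Injective fun t : (ℙ K U × ℙ K U') × Kˣ => cellPoint t.1 t.2 := by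
  rintro ⟨⟨p, q⟩, k⟩ ⟨⟨p', q'⟩, k'⟩ h
  obtain ⟨a, ha⟩ := (mk_eq_mk_iff K _ _ _ _).mp h
  simp only [Prod.smul_mk, Prod.mk.injEq] at ha
  obtain ⟨rfl, rfl⟩ := eq_and_eq_of_units_smul_rep_eq (a' := 1) (ha.1.trans (one_smul _ _).symm)
  obtain ⟨rfl, rfl⟩ := eq_and_eq_of_units_smul_rep_eq (by simpa using ha.2.symm)
  rfl

end Projectivization

open Projectivization

namespace DoobCode

variable {K U U' : Type*} [Field K] [AddCommGroup U] [Module K U] [AddCommGroup U'] [Module K U']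
  (ψ : ZMod 2 × ZMod 2 ≃+ K) {m n : ℕ} (cell : Fin m → ℙ K U × ℙ K U')

def ownedPoints : Set (ℙ K (U × U')) :=
  Set.range fun t : Fin m × Kˣ => cellPoint (cell t.1) t.2

noncomputable def coordLabel :
    ↥(ownedPoints cell)ᶜ ⊕ Fin m → (Fin m → ZMod 4 × ZMod 4) → ZMod 2 × ZMod 2 → U × U'
  | .inl u, _, z => ψ z • u.1.rep
  | .inr i, x, z =>
      (ψ (shK4Label (x i, z)).1 • (cell i).1.rep, ψ (shK4Label (x i, z)).2 • (cell i).2.rep)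

theorem coordLabel_update_of_ne {r : ↥(ownedPoints cell)ᶜ ⊕ Fin m}
    {i : Fin m} (h : r ≠ .inr i) (x : Fin m → ZMod 4 × ZMod 4) (s : ZMod 4 × ZMod 4)
    (z : ZMod 2 × ZMod 2) :
    coordLabel ψ cell r (Function.update x i s) z = coordLabel ψ cell r x z := by
  rcases r with u | i'
  · rfl
  · have hi : i' ≠ i := fun hi => h (hi ▸ rfl)
    simp only [coordLabel, Function.update_of_ne hi]

variable {cell} in
theorem card_ownedPoints_compl_add [Finite (U × U')] (hcell : Function.Injective cell)
    (hK : Nat.card K = 4) :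
    Nat.card ↥(ownedPoints cell)ᶜ + 3 * m = Nat.card (ℙ K (U × U')) := by
  have howned : (ownedPoints cell).ncard = m * 3 := by
    have hinj : Function.Injective fun t : Fin m × Kˣ => cellPoint (cell t.1) t.2 :=
      cellPoint_injective.comp (hcell.prodMap Function.injective_id)
    rw [ownedPoints, Set.ncard_range_of_injective hinj]
    simp [Nat.card_units, hK]
  rw [Nat.card_coe_set_eq, ← Set.ncard_add_ncard_compl (ownedPoints cell), howned]
  ring

variable (role : Fin n ≃ ↥(ownedPoints cell)ᶜ ⊕ Fin m)

noncomputable def syndrome (v : DoobVtx2 m n) : U × U' :=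
  ∑ j, coordLabel ψ cell (role j) v.1 (v.2 j)

theorem exists_adj_syndrome_sub_eq_smul_rep (v : DoobVtx2 m n) (u : ↥(ownedPoints cell)ᶜ)
    {c : K} (hc : c ≠ 0) :
    ∃ w, (DoobGraphZ2 m n).Adj v w ∧
      syndrome ψ cell role w - syndrome ψ cell role v = c • u.1.rep := by
  obtain ⟨x, y⟩ := v
  set j := role.symm (.inl u)
  refine ⟨(x, Function.update y j (y j + ψ.symm c)), ?_, ?_⟩
  · exact boxProd_adj_right.mpr (boxPi_adj_update _ (by simpa using hc))
  · rw [syndrome, syndrome, Fintype.sum_sub_sum_eq_of_forall_ne j fun j' hj' => by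
      dsimp only; rw [Function.update_of_ne hj']]
    simp [j, coordLabel, ← sub_smul]

theorem exists_adj_syndrome_sub_eq_cell (v : DoobVtx2 m n) (i : Fin m) {c e : K}
    (hc : c ≠ 0) (he : e ≠ 0) :
    ∃ w, (DoobGraphZ2 m n).Adj v w ∧
      syndrome ψ cell role w - syndrome ψ cell role v =
        (c • (cell i).1.rep, e • (cell i).2.rep) := by
  obtain ⟨x, y⟩ := v
  set j := role.symm (.inr i)
  obtain ⟨⟨s, z⟩, hadj, h1, h2⟩ := exists_adj_shK4Label_sub_eq ψ (x i, y j) hc he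
  refine ⟨(Function.update x i s, Function.update y j z), boxProd_boxPi_adj_update _ _ hadj, ?_⟩
  rw [syndrome, syndrome, Fintype.sum_sub_sum_eq_of_forall_ne j fun j' hj' => ?_]
  · simp [j, coordLabel, ← sub_smul, h1, h2]
  · dsimp only
    rw [Function.update_of_ne hj', coordLabel_update_of_ne]
    rwa [Ne, ← role.eq_symm_apply]

theorem exists_adj_syndrome_sub_eq (v : DoobVtx2 m n) {s : U × U'} (hs : s ≠ 0) :
    ∃ w, (DoobGraphZ2 m n).Adj v w ∧ syndrome ψ cell role w - syndrome ψ cell role v = s := by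
  by_cases h : mk K s hs ∈ ownedPoints cell
  · obtain ⟨⟨i, k⟩, hik⟩ := h
    obtain ⟨a, ha⟩ := (mk_eq_mk_iff K _ _ _ _).mp hik
    obtain ⟨w, hw, hsyn⟩ := exists_adj_syndrome_sub_eq_cell ψ cell role v i
      (c := ((a⁻¹ : Kˣ) : K)) (e := ((a⁻¹ * k : Kˣ) : K)) (Units.ne_zero _) (Units.ne_zero _)
    refine ⟨w, hw, hsyn.trans ?_⟩
    rw [← inv_smul_smul a s, ha]
    simp [Units.smul_def, mul_smul]
  · obtain ⟨c, hc⟩ := exists_units_smul_rep_eq K s hs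
    obtain ⟨w, hw, hsyn⟩ :=
      exists_adj_syndrome_sub_eq_smul_rep ψ cell role v ⟨_, h⟩ (Units.ne_zero c)
    exact ⟨w, hw, hsyn.trans hc⟩

theorem surjOn_syndrome (v : DoobVtx2 m n) :
    Set.SurjOn (syndrome ψ cell role) (insert v ((DoobGraphZ2 m n).neighborSet v)) Set.univ := by
  intro t _
  by_cases ht : t = syndrome ψ cell role v
  · exact ⟨v, Set.mem_insert _ _, ht.symm⟩
  · obtain ⟨w, hw, hsyn⟩ := exists_adj_syndrome_sub_eq ψ cell role v (sub_ne_zero.mpr ht)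
    exact ⟨w, Set.mem_insert_of_mem _ hw, sub_left_injective hsyn⟩

end DoobCode

open DoobCode in
theorem exists_isPerfectCode_doobGraphZ2 {K U U' : Type*} [Field K] [AddCommGroup U]
    [Module K U] [AddCommGroup U'] [Module K U'] (ψ : ZMod 2 × ZMod 2 ≃+ K) {m n : ℕ}
    (cell : Fin m → ℙ K U × ℙ K U') (hcell : Function.Injective cell)
    (hcard : 3 * (2 * m + n) + 1 = Nat.card (U × U')) :
    ∃ C : Set (DoobVtx2 m n), IsPerfectCode (DoobGraphZ2 m n) C := by
  have : Finite (U × U') := Nat.finite_of_card_ne_zero (by omega)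
  have hK : Nat.card K = 4 := by simp [← Nat.card_congr ψ.toEquiv]
  have hP : Nat.card (U × U') = Nat.card (ℙ K (U × U')) * 3 + 1 := by
    simpa [hK] using Projectivization.card' K (U × U')
  have hplain := card_ownedPoints_compl_add hcell hK
  obtain ⟨role⟩ : Nonempty (Fin n ≃ ↥(ownedPoints cell)ᶜ ⊕ Fin m) := by
    rw [← Finite.card_eq, Nat.card_sum, Nat.card_fin, Nat.card_fin]
    omega
  refine ⟨_, isPerfectCode_preimage_of_surjOn _ (syndrome ψ cell role)
    (surjOn_syndrome ψ cell role) (fun v => ?_) 0⟩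
  exact (ncard_insert_neighborSet_doobGraphZ2_le v).trans (by omega)

theorem le_mul_of_small_m_bound {m μ N₁ N₂ : ℕ}
    (hodd : Odd μ → 9 * m + 5 * 2 ^ (μ - 1) ≤ 4 ^ μ + 1)
    (heven : Even μ → 9 * m + 2 ^ (μ + 1) ≤ 4 ^ μ + 1)
    (h₁ : 3 * N₁ + 1 = 4 ^ (μ / 2)) (h₂ : 3 * N₂ + 1 = 4 ^ (μ - μ / 2)) : m ≤ N₁ * N₂ := by
  rcases Nat.even_or_odd' μ with ⟨k, rfl | rfl⟩
  all_goals have h2 : 2 ^ (2 * k) = 4 ^ k := by rw [pow_mul]; norm_num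
  all_goals have h4 : 4 ^ (2 * k) = 4 ^ k * 4 ^ k := by rw [two_mul, pow_add]
  · have h := heven (even_two_mul k)
    rw [show 2 * k / 2 = k by omega] at h₁ h₂
    rw [show 2 * k - k = k by omega] at h₂
    rw [pow_succ, h2, h4, ← h₁] at h
    nlinarith
  · have h := hodd (odd_two_mul_add_one k)
    rw [show (2 * k + 1) / 2 = k by omega] at h₁ h₂
    rw [show 2 * k + 1 - k = k + 1 by omega, pow_succ, ← h₁] at h₂
    rw [Nat.add_sub_cancel, pow_succ, h2, h4, ← h₁] at h
    nlinarith

theorem nonempty_addEquiv_galoisField_two_two : Nonempty (ZMod 2 × ZMod 2 ≃+ GaloisField 2 2) :=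
  ⟨(LinearEquiv.ofFinrankEq _ _ <| by
    rw [GaloisField.finrank 2 two_ne_zero, Module.finrank_prod, Module.finrank_self]).toAddEquiv⟩

theorem card_projectivization_fin_arrow {K : Type*} [Field K] (hK : Nat.card K = 4) (a : ℕ) :
    3 * Nat.card (ℙ K (Fin a → K)) + 1 = 4 ^ a := by
  have : Finite K := Nat.finite_of_card_ne_zero (by omega)
  have h := Projectivization.card' K (Fin a → K)
  rw [hK, Nat.card_fun, hK, Nat.card_fin] at h
  omega

theorem exists_perfect_code_small_m_general (m n μ : ℕ)
    (hmn : 3 * (2 * m + n) + 1 = 4 ^ μ)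
    (hodd : Odd μ → 9 * m + 5 * 2 ^ (μ - 1) ≤ 4 ^ μ + 1)
    (heven : Even μ → 9 * m + 2 ^ (μ + 1) ≤ 4 ^ μ + 1) :
    ∃ C : Set (DoobVtx2 m n), IsPerfectCode (DoobGraphZ2 m n) C := by
  obtain ⟨ψ⟩ := nonempty_addEquiv_galoisField_two_two
  have hK : Nat.card (GaloisField 2 2) = 4 := by simp [← Nat.card_congr ψ.toEquiv]
  let Grid := ℙ (GaloisField 2 2) (Fin (μ / 2) → GaloisField 2 2) ×
    ℙ (GaloisField 2 2) (Fin (μ - μ / 2) → GaloisField 2 2)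
  have hm : m ≤ Nat.card Grid := by
    rw [Nat.card_prod]
    exact le_mul_of_small_m_bound hodd heven
      (card_projectivization_fin_arrow hK _) (card_projectivization_fin_arrow hK _)
  have := Fintype.ofFinite Grid
  obtain ⟨cell⟩ := Function.Embedding.nonempty_of_card_le (α := Fin m) (β := Grid)
    (by rwa [Fintype.card_fin, ← Nat.card_eq_fintype_card])
  refine exists_isPerfectCode_doobGraphZ2 ψ cell cell.injective ?_
  rw [hmn, Nat.card_prod, Nat.card_fun, Nat.card_fun, hK, Nat.card_fin, Nat.card_fin, ← pow_add,
    Nat.add_sub_cancel' (Nat.div_le_self μ 2)]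

theorem exists_perfect_code_small_m (m n μ : ℕ) (hm : 0 < m) (hn : 0 < n) (hμ : 0 < μ)
    (hmn : 3 * (2 * m + n) + 1 = 4 ^ μ)
    (hodd : Odd μ → 9 * m + 5 * 2 ^ (μ - 1) ≤ 4 ^ μ + 1)
    (heven : Even μ → 9 * m + 2 ^ (μ + 1) ≤ 4 ^ μ + 1) :
    ∃ C : Set (DoobVtx2 m n), IsPerfectCode (DoobGraphZ2 m n) C :=
  exists_perfect_code_small_m_general m n μ hmn hodd heven
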